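/- arXiv:1810.05070 — 3 statements merged into one kernel-verified Lean document; each statement's English description precedes it below -/
import Mathlib

section
/- In base 3, the set of positive integers having an increasing crazy sequential representation is exactly {1, 2, 3, 5}, and the set of positive integers having a decreasing crazy sequential representation is exactly {1, 2, 3, 7}; in particular, 0 has neither kind of representation in base 3. -/
def numeralValue (b : ℕ) (l : List ℕ) : ℕ :=
  l.foldl (fun acc d => acc * b + d) 0

inductive CsrEval (b : ℕ) : List ℕ → ℝ → Prop
  | lit (l : List ℕ) (hl : l ≠ []) : CsrEval b l (numeralValue b l : ℝ)
  | add {l₁ l₂ : List ℕ} {x y : ℝ} :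
      CsrEval b l₁ x → CsrEval b l₂ y → CsrEval b (l₁ ++ l₂) (x + y)
  | mul {l₁ l₂ : List ℕ} {x y : ℝ} :
      CsrEval b l₁ x → CsrEval b l₂ y → CsrEval b (l₁ ++ l₂) (x * y)
  | div {l₁ l₂ : List ℕ} {x y : ℝ} (hy : y ≠ 0) :
      CsrEval b l₁ x → CsrEval b l₂ y → CsrEval b (l₁ ++ l₂) (x / y)
  | rpow {l₁ l₂ : List ℕ} {x y : ℝ} (hx : 0 < x) :
      CsrEval b l₁ x → CsrEval b l₂ y → CsrEval b (l₁ ++ l₂) (x ^ y)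
  | zpow {l₁ l₂ : List ℕ} {x : ℝ} (n : ℤ) (hx : x ≠ 0) :
      CsrEval b l₁ x → CsrEval b l₂ (n : ℝ) → CsrEval b (l₁ ++ l₂) (x ^ n)
  | neg {l : List ℕ} {x : ℝ} : CsrEval b l x → CsrEval b l (-x)

def IncCsr (b : ℕ) (x : ℝ) : Prop :=
  CsrEval b (List.range' 1 (b - 1)) x

def DecCsr (b : ℕ) (x : ℝ) : Prop :=
  CsrEval b (List.range' 1 (b - 1)).reverse x

lemma csr_ne_nil {b : ℕ} {l : List ℕ} {x : ℝ} (h : CsrEval b l x) : l ≠ [] := by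
  induction h with
  | lit l hl => exact hl
  | neg _ ih => exact ih
  | add _ _ ih1 ih2 => simp [List.append_eq_nil_iff]; tauto
  | mul _ _ ih1 ih2 => simp [List.append_eq_nil_iff]; tauto
  | div _ _ _ ih1 ih2 => simp [List.append_eq_nil_iff]; tauto
  | rpow _ _ _ ih1 ih2 => simp [List.append_eq_nil_iff]; tauto
  | zpow _ _ _ _ ih1 ih2 => simp [List.append_eq_nil_iff]; tauto

lemma split1 {l₁ l₂ : List ℕ} {a : ℕ} (h₁ : l₁ ≠ []) (h₂ : l₂ ≠ []) :
    l₁ ++ l₂ ≠ [a] := by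
  intro h
  have := congrArg List.length h
  simp [List.length_append] at this
  rcases List.exists_cons_of_ne_nil h₁ with ⟨x, t, rfl⟩
  rcases List.exists_cons_of_ne_nil h₂ with ⟨y, s, rfl⟩
  simp at this
  omega

lemma split2 {l₁ l₂ : List ℕ} {a c : ℕ} (h₁ : l₁ ≠ []) (h₂ : l₂ ≠ [])
    (h : l₁ ++ l₂ = [a, c]) : l₁ = [a] ∧ l₂ = [c] := by
  rcases List.exists_cons_of_ne_nil h₁ with ⟨x, t, rfl⟩
  rcases List.exists_cons_of_ne_nil h₂ with ⟨y, s, rfl⟩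
  rcases t with _ | ⟨z, u⟩
  · simp_all
  · exfalso
    have := congrArg List.length h
    simp [List.length_append] at this

def S12 : Set ℝ := {5, -5, 3, -3, 2, -2, 1, -1, 1/2, -1/2}
def S21 : Set ℝ := {7, -7, 3, -3, 2, -2, 1, -1, 1/2, -1/2}

lemma main {l : List ℕ} {x : ℝ} (h : CsrEval 3 l x) :
    (l = [1] → x = 1 ∨ x = -1) ∧
    (l = [2] → x = 2 ∨ x = -2) ∧
    (l = [1, 2] → x ∈ S12) ∧
    (l = [2, 1] → x ∈ S21) := by
  induction h with
  | lit l hl =>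
    refine ⟨?_, ?_, ?_, ?_⟩ <;> rintro rfl
    · rw [show numeralValue 3 [1] = 1 from rfl]; norm_num
    · rw [show numeralValue 3 [2] = 2 from rfl]; norm_num
    · rw [show numeralValue 3 [1, 2] = 5 from rfl]; simp only [S12, Set.mem_insert_iff, Set.mem_singleton_iff]; norm_num
    · rw [show numeralValue 3 [2, 1] = 7 from rfl]; simp only [S21, Set.mem_insert_iff, Set.mem_singleton_iff]; norm_num
  | neg _ ih =>
    obtain ⟨i1, i2, i3, i4⟩ := ih
    refine ⟨?_, ?_, ?_, ?_⟩ <;> rintro rfl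
    · rcases i1 rfl with rfl | rfl <;> norm_num
    · rcases i2 rfl with rfl | rfl <;> norm_num
    · have := i3 rfl; simp only [S12, Set.mem_insert_iff, Set.mem_singleton_iff] at this ⊢
      rcases this with h|h|h|h|h|h|h|h|h|h <;> rw [h] <;> norm_num
    · have := i4 rfl; simp only [S21, Set.mem_insert_iff, Set.mem_singleton_iff] at this ⊢
      rcases this with h|h|h|h|h|h|h|h|h|h <;> rw [h] <;> norm_num
  | add h1 h2 ih1 ih2 =>
    refine ⟨?_, ?_, ?_, ?_⟩ <;> intro he
    · exact absurd he (split1 (csr_ne_nil h1) (csr_ne_nil h2))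
    · exact absurd he (split1 (csr_ne_nil h1) (csr_ne_nil h2))
    · obtain ⟨e1, e2⟩ := split2 (csr_ne_nil h1) (csr_ne_nil h2) he
      rcases ih1.1 e1 with rfl | rfl <;> rcases ih2.2.1 e2 with rfl | rfl <;>
        { simp only [S12, Set.mem_insert_iff, Set.mem_singleton_iff]; norm_num }
    · obtain ⟨e1, e2⟩ := split2 (csr_ne_nil h1) (csr_ne_nil h2) he
      rcases ih1.2.1 e1 with rfl | rfl <;> rcases ih2.1 e2 with rfl | rfl <;>
        { simp only [S21, Set.mem_insert_iff, Set.mem_singleton_iff]; norm_num }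
  | mul h1 h2 ih1 ih2 =>
    refine ⟨?_, ?_, ?_, ?_⟩ <;> intro he
    · exact absurd he (split1 (csr_ne_nil h1) (csr_ne_nil h2))
    · exact absurd he (split1 (csr_ne_nil h1) (csr_ne_nil h2))
    · obtain ⟨e1, e2⟩ := split2 (csr_ne_nil h1) (csr_ne_nil h2) he
      rcases ih1.1 e1 with rfl | rfl <;> rcases ih2.2.1 e2 with rfl | rfl <;>
        { simp only [S12, Set.mem_insert_iff, Set.mem_singleton_iff]; norm_num }
    · obtain ⟨e1, e2⟩ := split2 (csr_ne_nil h1) (csr_ne_nil h2) he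
      rcases ih1.2.1 e1 with rfl | rfl <;> rcases ih2.1 e2 with rfl | rfl <;>
        { simp only [S21, Set.mem_insert_iff, Set.mem_singleton_iff]; norm_num }
  | div hy h1 h2 ih1 ih2 =>
    refine ⟨?_, ?_, ?_, ?_⟩ <;> intro he
    · exact absurd he (split1 (csr_ne_nil h1) (csr_ne_nil h2))
    · exact absurd he (split1 (csr_ne_nil h1) (csr_ne_nil h2))
    · obtain ⟨e1, e2⟩ := split2 (csr_ne_nil h1) (csr_ne_nil h2) he
      rcases ih1.1 e1 with rfl | rfl <;> rcases ih2.2.1 e2 with rfl | rfl <;>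
        { simp only [S12, Set.mem_insert_iff, Set.mem_singleton_iff]; norm_num }
    · obtain ⟨e1, e2⟩ := split2 (csr_ne_nil h1) (csr_ne_nil h2) he
      rcases ih1.2.1 e1 with rfl | rfl <;> rcases ih2.1 e2 with rfl | rfl <;>
        { simp only [S21, Set.mem_insert_iff, Set.mem_singleton_iff]; norm_num }
  | rpow hx h1 h2 ih1 ih2 =>
    refine ⟨?_, ?_, ?_, ?_⟩ <;> intro he
    · exact absurd he (split1 (csr_ne_nil h1) (csr_ne_nil h2))
    · exact absurd he (split1 (csr_ne_nil h1) (csr_ne_nil h2))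
    · obtain ⟨e1, e2⟩ := split2 (csr_ne_nil h1) (csr_ne_nil h2) he
      rcases ih1.1 e1 with rfl | rfl
      · rw [Real.one_rpow]; simp only [S12, Set.mem_insert_iff, Set.mem_singleton_iff]; norm_num
      · norm_num at hx
    · obtain ⟨e1, e2⟩ := split2 (csr_ne_nil h1) (csr_ne_nil h2) he
      rcases ih1.2.1 e1 with rfl | rfl
      · rcases ih2.1 e2 with rfl | rfl
        · rw [Real.rpow_one]; simp only [S21, Set.mem_insert_iff, Set.mem_singleton_iff]; norm_num
        · rw [Real.rpow_neg_one]
          simp only [S21, Set.mem_insert_iff, Set.mem_singleton_iff]; norm_num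
      · norm_num at hx
  | zpow n hx h1 h2 ih1 ih2 =>
    refine ⟨?_, ?_, ?_, ?_⟩ <;> intro he
    · exact absurd he (split1 (csr_ne_nil h1) (csr_ne_nil h2))
    · exact absurd he (split1 (csr_ne_nil h1) (csr_ne_nil h2))
    · obtain ⟨e1, e2⟩ := split2 (csr_ne_nil h1) (csr_ne_nil h2) he
      have hn : n = 2 ∨ n = -2 := by
        rcases ih2.2.1 e2 with h | h
        · left; exact_mod_cast h
        · right; exact_mod_cast h
      rcases ih1.1 e1 with rfl | rfl <;> rcases hn with rfl | rfl <;>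
        { simp only [S12, Set.mem_insert_iff, Set.mem_singleton_iff]; norm_num }
    · obtain ⟨e1, e2⟩ := split2 (csr_ne_nil h1) (csr_ne_nil h2) he
      have hn : n = 1 ∨ n = -1 := by
        rcases ih2.1 e2 with h | h
        · left; exact_mod_cast h
        · right; exact_mod_cast h
      rcases ih1.2.1 e1 with rfl | rfl <;> rcases hn with rfl | rfl <;>
        { simp only [S21, Set.mem_insert_iff, Set.mem_singleton_iff]; norm_num }

lemma inc_list : List.range' 1 (3 - 1) = [1, 2] := rfl
lemma dec_list : (List.range' 1 (3 - 1)).reverse = [2, 1] := rfl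

lemma lit1 : CsrEval 3 [1] (1 : ℝ) := by
  have := CsrEval.lit (b := 3) [1] (by simp)
  norm_num [numeralValue] at this
  exact this

lemma lit2 : CsrEval 3 [2] (2 : ℝ) := by
  have := CsrEval.lit (b := 3) [2] (by simp)
  norm_num [numeralValue] at this
  exact this

lemma inc5 : CsrEval 3 [1, 2] (5 : ℝ) := by
  have := CsrEval.lit (b := 3) [1, 2] (by simp)
  norm_num [numeralValue] at this
  exact this

lemma inc3 : CsrEval 3 [1, 2] (3 : ℝ) := by
  have := CsrEval.add lit1 lit2
  norm_num at this
  exact this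

lemma inc2 : CsrEval 3 [1, 2] (2 : ℝ) := by
  have := CsrEval.mul lit1 lit2
  norm_num at this
  exact this

lemma inc1 : CsrEval 3 [1, 2] (1 : ℝ) := by
  have := CsrEval.rpow (by norm_num : (0:ℝ) < 1) lit1 lit2
  rw [Real.one_rpow] at this
  exact this

lemma dec7 : CsrEval 3 [2, 1] (7 : ℝ) := by
  have := CsrEval.lit (b := 3) [2, 1] (by simp)
  norm_num [numeralValue] at this
  exact this

lemma dec3 : CsrEval 3 [2, 1] (3 : ℝ) := by
  have := CsrEval.add lit2 lit1
  norm_num at this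
  exact this

lemma dec2 : CsrEval 3 [2, 1] (2 : ℝ) := by
  have := CsrEval.mul lit2 lit1
  norm_num at this
  exact this

lemma dec1 : CsrEval 3 [2, 1] (1 : ℝ) := by
  have := CsrEval.add lit2 (CsrEval.neg lit1)
  norm_num at this
  exact this

lemma nat_in_S12 {n : ℕ} (h : (n : ℝ) ∈ S12) : n = 5 ∨ n = 3 ∨ n = 2 ∨ n = 1 := by
  have h0 : (0 : ℝ) ≤ n := Nat.cast_nonneg n
  simp only [S12, Set.mem_insert_iff, Set.mem_singleton_iff] at h
  rcases h with h|h|h|h|h|h|h|h|h|h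
  · left; exact_mod_cast h
  · linarith
  · right; left; exact_mod_cast h
  · linarith
  · right; right; left; exact_mod_cast h
  · linarith
  · right; right; right; exact_mod_cast h
  · linarith
  · exfalso
    have : ((2 * n : ℕ) : ℝ) = 1 := by push_cast; linarith
    have : 2 * n = 1 := by exact_mod_cast this
    omega
  · linarith

lemma nat_in_S21 {n : ℕ} (h : (n : ℝ) ∈ S21) : n = 7 ∨ n = 3 ∨ n = 2 ∨ n = 1 := by
  have h0 : (0 : ℝ) ≤ n := Nat.cast_nonneg n
  simp only [S21, Set.mem_insert_iff, Set.mem_singleton_iff] at h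
  rcases h with h|h|h|h|h|h|h|h|h|h
  · left; exact_mod_cast h
  · linarith
  · right; left; exact_mod_cast h
  · linarith
  · right; right; left; exact_mod_cast h
  · linarith
  · right; right; right; exact_mod_cast h
  · linarith
  · exfalso
    have : ((2 * n : ℕ) : ℝ) = 1 := by push_cast; linarith
    have : 2 * n = 1 := by exact_mod_cast this
    omega
  · linarith

theorem base3_representable_sets :
    {n : ℕ | 0 < n ∧ IncCsr 3 (n : ℝ)} = ({1, 2, 3, 5} : Set ℕ) ∧
    {n : ℕ | 0 < n ∧ DecCsr 3 (n : ℝ)} = ({1, 2, 3, 7} : Set ℕ) ∧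
    ¬ IncCsr 3 (0 : ℝ) ∧ ¬ DecCsr 3 (0 : ℝ) := by
  refine ⟨?_, ?_, ?_, ?_⟩
  · ext n
    simp only [Set.mem_setOf_eq, Set.mem_insert_iff, Set.mem_singleton_iff]
    constructor
    · rintro ⟨hn, h⟩
      rw [IncCsr, inc_list] at h
      have := nat_in_S12 ((main h).2.2.1 rfl)
      tauto
    · rintro (rfl | rfl | rfl | rfl) <;>
        exact ⟨by norm_num, by rw [IncCsr, inc_list]; first
          | exact_mod_cast inc1 | exact_mod_cast inc2
          | exact_mod_cast inc3 | exact_mod_cast inc5⟩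
  · ext n
    simp only [Set.mem_setOf_eq, Set.mem_insert_iff, Set.mem_singleton_iff]
    constructor
    · rintro ⟨hn, h⟩
      rw [DecCsr, dec_list] at h
      have := nat_in_S21 ((main h).2.2.2 rfl)
      tauto
    · rintro (rfl | rfl | rfl | rfl) <;>
        exact ⟨by norm_num, by rw [DecCsr, dec_list]; first
          | exact_mod_cast dec1 | exact_mod_cast dec2
          | exact_mod_cast dec3 | exact_mod_cast dec7⟩
  · intro h
    rw [IncCsr, inc_list] at h
    have := (main h).2.2.1 rfl
    simp only [S12, Set.mem_insert_iff, Set.mem_singleton_iff] at this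
    norm_num at this
  · intro h
    rw [DecCsr, dec_list] at h
    have := (main h).2.2.2 rfl
    simp only [S21, Set.mem_insert_iff, Set.mem_singleton_iff] at this
    norm_num at this
end

section
/- The largest integer possessing a crazy sequential representation (increasing or decreasing) in base 4 is 19683; it is attained by the decreasing expression 3^(21), where 21 is read as a base-4 numeral (so 19683 = 3^9), and no integer greater than 19683 has a crazy sequential representation in base 4 in either order. -/
/- ### Auxiliary lemmas -/

lemma abs_zpow' (x : ℝ) (n : ℤ) : |x ^ n| = |x| ^ n := by
  rcases n with m | m
  · simpa using abs_pow x m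
  · rw [zpow_negSucc, zpow_negSucc, abs_inv, abs_pow]

lemma splitNil {l₁ l₂ : List ℕ} (h : l₁ ++ l₂ = []) (h1 : l₁ = [] → False) : False := by
  rcases l₁ with _ | ⟨p, l⟩ <;> simp_all

lemma split1_s12 {l₁ l₂ : List ℕ} {a : ℕ} (h : l₁ ++ l₂ = [a]) (h1 : l₁ = [] → False)
    (h2 : l₂ = [] → False) : False := by
  rcases l₁ with _ | ⟨p, l⟩ <;> simp_all

lemma split2_s12 {l₁ l₂ : List ℕ} {a b : ℕ} (h : l₁ ++ l₂ = [a, b]) (h1 : l₁ = [] → False)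
    (h2 : l₂ = [] → False) : l₁ = [a] ∧ l₂ = [b] := by
  rcases l₁ with _ | ⟨p, _ | ⟨q, l⟩⟩ <;> simp_all

lemma split3 {l₁ l₂ : List ℕ} {a b c : ℕ} (h : l₁ ++ l₂ = [a, b, c]) (h1 : l₁ = [] → False)
    (h2 : l₂ = [] → False) :
    (l₁ = [a] ∧ l₂ = [b, c]) ∨ (l₁ = [a, b] ∧ l₂ = [c]) := by
  rcases l₁ with _ | ⟨p, _ | ⟨q, _ | ⟨r, l⟩⟩⟩ <;> simp_all

lemma rpow_le {x y B c : ℝ} (hx : 0 < x) (hB : 1 ≤ B) (h1 : x ≤ B) (h2 : x⁻¹ ≤ B)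
    (hy : |y| ≤ c) : x ^ y ≤ B ^ c := by
  have hc : 0 ≤ c := le_trans (abs_nonneg y) hy
  rcases le_or_gt 1 x with h | h
  · calc x ^ y ≤ x ^ c := Real.rpow_le_rpow_of_exponent_le h (le_trans (le_abs_self y) hy)
      _ ≤ B ^ c := Real.rpow_le_rpow hx.le h1 hc
  · have hx1 : 1 ≤ x⁻¹ := (one_le_inv₀ hx).mpr h.le
    have e : x ^ y = (x⁻¹) ^ (-y) := by
      rw [Real.rpow_neg (inv_nonneg.mpr hx.le), Real.inv_rpow hx.le, inv_inv]
    rw [e]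
    calc (x⁻¹) ^ (-y) ≤ (x⁻¹) ^ c :=
          Real.rpow_le_rpow_of_exponent_le hx1 (le_trans (neg_le_abs y) hy)
      _ ≤ B ^ c := Real.rpow_le_rpow (by positivity) h2 hc

lemma rpow_nine : (3 : ℝ) ^ (9 : ℝ) = 19683 := by
  rw [show (9 : ℝ) = ((9 : ℕ) : ℝ) by norm_num, Real.rpow_natCast]; norm_num

lemma rpow_cube : (6 : ℝ) ^ (3 : ℝ) = 216 := by
  rw [show (3 : ℝ) = ((3 : ℕ) : ℝ) by norm_num, Real.rpow_natCast]; norm_num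

/-- The invariant: possible values of crazy sequential subexpressions in base 4. -/
structure PP (l : List ℕ) (x : ℝ) : Prop where
  hnil : l = [] → False
  h1 : l = [1] → |x| = 1
  h2 : l = [2] → |x| = 2
  h3 : l = [3] → |x| = 3
  h12 : l = [1, 2] → |x| = 6 ∨ |x| = 3 ∨ |x| = 1 ∨ |x| = 2 ∨ |x| = 2⁻¹
  h23 : l = [2, 3] → |x| = 11 ∨ |x| = 5 ∨ |x| = 1 ∨ |x| = 6 ∨ |x| = 2/3 ∨ |x| = 8 ∨ |x| = 8⁻¹
  h32 : l = [3, 2] → |x| = 14 ∨ |x| = 5 ∨ |x| = 1 ∨ |x| = 6 ∨ |x| = 3/2 ∨ |x| = 9 ∨ |x| = 9⁻¹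
  h21 : l = [2, 1] → |x| = 9 ∨ |x| = 3 ∨ |x| = 1 ∨ |x| = 2 ∨ |x| = 2⁻¹
  h123 : l = [1, 2, 3] → |x| ≤ 216
  h321 : l = [3, 2, 1] → |x| ≤ 19683

lemma intAbsOf {n : ℤ} {r : ℝ} (h : |(n : ℝ)| = r) : ((|n| : ℤ) : ℝ) = r := by
  rw [Int.cast_abs]; exact h

lemma csrP : ∀ {l : List ℕ} {x : ℝ}, CsrEval 4 l x → PP l x := by
  intro l x h
  induction h with
  | lit l hl =>
    refine ⟨fun h => hl h, ?_, ?_, ?_, ?_, ?_, ?_, ?_, ?_, ?_⟩ <;> rintro rfl <;>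
      norm_num [numeralValue]
  | neg h ih =>
    obtain ⟨a, b, c, d, e, f, g, h', i, j⟩ := ih
    exact ⟨a, by simpa using b, by simpa using c, by simpa using d, by simpa using e,
      by simpa using f, by simpa using g, by simpa using h', by simpa using i,
      by simpa using j⟩
  | @add l₁ l₂ x y _ _ ih1 ih2 =>
    refine ⟨?_, ?_, ?_, ?_, ?_, ?_, ?_, ?_, ?_, ?_⟩ <;> intro h
    · exact splitNil h ih1.hnil
    · exact (split1_s12 h ih1.hnil ih2.hnil).elim
    · exact (split1_s12 h ih1.hnil ih2.hnil).elim
    · exact (split1_s12 h ih1.hnil ih2.hnil).elim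
    · obtain ⟨e1, e2⟩ := split2_s12 h ih1.hnil ih2.hnil
      have hx := ih1.h1 e1; have hy := ih2.h2 e2
      rcases (abs_eq (by norm_num)).mp hx with rfl | rfl <;>
        rcases (abs_eq (by norm_num)).mp hy with rfl | rfl <;> norm_num
    · obtain ⟨e1, e2⟩ := split2_s12 h ih1.hnil ih2.hnil
      have hx := ih1.h2 e1; have hy := ih2.h3 e2
      rcases (abs_eq (by norm_num)).mp hx with rfl | rfl <;>
        rcases (abs_eq (by norm_num)).mp hy with rfl | rfl <;> norm_num
    · obtain ⟨e1, e2⟩ := split2_s12 h ih1.hnil ih2.hnil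
      have hx := ih1.h3 e1; have hy := ih2.h2 e2
      rcases (abs_eq (by norm_num)).mp hx with rfl | rfl <;>
        rcases (abs_eq (by norm_num)).mp hy with rfl | rfl <;> norm_num
    · obtain ⟨e1, e2⟩ := split2_s12 h ih1.hnil ih2.hnil
      have hx := ih1.h2 e1; have hy := ih2.h1 e2
      rcases (abs_eq (by norm_num)).mp hx with rfl | rfl <;>
        rcases (abs_eq (by norm_num)).mp hy with rfl | rfl <;> norm_num
    · rcases split3 h ih1.hnil ih2.hnil with ⟨e1, e2⟩ | ⟨e1, e2⟩
      · have hx := ih1.h1 e1; have hy := ih2.h23 e2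
        have hy' : |y| ≤ 11 := by
          rcases hy with h' | h' | h' | h' | h' | h' | h' <;> rw [h'] <;> norm_num
        have h3 := abs_add_le x y; linarith
      · have hx := ih1.h12 e1; have hy := ih2.h3 e2
        have hx' : |x| ≤ 6 := by
          rcases hx with h' | h' | h' | h' | h' <;> rw [h'] <;> norm_num
        have h3 := abs_add_le x y; linarith
    · rcases split3 h ih1.hnil ih2.hnil with ⟨e1, e2⟩ | ⟨e1, e2⟩
      · have hx := ih1.h3 e1; have hy := ih2.h21 e2
        have hy' : |y| ≤ 9 := by
          rcases hy with h' | h' | h' | h' | h' <;> rw [h'] <;> norm_num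
        have h3 := abs_add_le x y; linarith
      · have hx := ih1.h32 e1; have hy := ih2.h1 e2
        have hx' : |x| ≤ 14 := by
          rcases hx with h' | h' | h' | h' | h' | h' | h' <;> rw [h'] <;> norm_num
        have h3 := abs_add_le x y; linarith
  | @mul l₁ l₂ x y _ _ ih1 ih2 =>
    refine ⟨?_, ?_, ?_, ?_, ?_, ?_, ?_, ?_, ?_, ?_⟩ <;> intro h
    · exact splitNil h ih1.hnil
    · exact (split1_s12 h ih1.hnil ih2.hnil).elim
    · exact (split1_s12 h ih1.hnil ih2.hnil).elim
    · exact (split1_s12 h ih1.hnil ih2.hnil).elim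
    · obtain ⟨e1, e2⟩ := split2_s12 h ih1.hnil ih2.hnil
      rw [abs_mul, ih1.h1 e1, ih2.h2 e2]; norm_num
    · obtain ⟨e1, e2⟩ := split2_s12 h ih1.hnil ih2.hnil
      rw [abs_mul, ih1.h2 e1, ih2.h3 e2]; norm_num
    · obtain ⟨e1, e2⟩ := split2_s12 h ih1.hnil ih2.hnil
      rw [abs_mul, ih1.h3 e1, ih2.h2 e2]; norm_num
    · obtain ⟨e1, e2⟩ := split2_s12 h ih1.hnil ih2.hnil
      rw [abs_mul, ih1.h2 e1, ih2.h1 e2]; norm_num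
    · rcases split3 h ih1.hnil ih2.hnil with ⟨e1, e2⟩ | ⟨e1, e2⟩
      · have hx := ih1.h1 e1; have hy := ih2.h23 e2
        have hy' : |y| ≤ 11 := by
          rcases hy with h' | h' | h' | h' | h' | h' | h' <;> rw [h'] <;> norm_num
        rw [abs_mul, hx]; linarith
      · have hx := ih1.h12 e1; have hy := ih2.h3 e2
        have hx' : |x| ≤ 6 := by
          rcases hx with h' | h' | h' | h' | h' <;> rw [h'] <;> norm_num
        rw [abs_mul, hy]; linarith
    · rcases split3 h ih1.hnil ih2.hnil with ⟨e1, e2⟩ | ⟨e1, e2⟩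
      · have hx := ih1.h3 e1; have hy := ih2.h21 e2
        have hy' : |y| ≤ 9 := by
          rcases hy with h' | h' | h' | h' | h' <;> rw [h'] <;> norm_num
        rw [abs_mul, hx]; linarith
      · have hx := ih1.h32 e1; have hy := ih2.h1 e2
        have hx' : |x| ≤ 14 := by
          rcases hx with h' | h' | h' | h' | h' | h' | h' <;> rw [h'] <;> norm_num
        rw [abs_mul, hy]; linarith
  | @div l₁ l₂ x y hy0 _ _ ih1 ih2 =>
    refine ⟨?_, ?_, ?_, ?_, ?_, ?_, ?_, ?_, ?_, ?_⟩ <;> intro h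
    · exact splitNil h ih1.hnil
    · exact (split1_s12 h ih1.hnil ih2.hnil).elim
    · exact (split1_s12 h ih1.hnil ih2.hnil).elim
    · exact (split1_s12 h ih1.hnil ih2.hnil).elim
    · obtain ⟨e1, e2⟩ := split2_s12 h ih1.hnil ih2.hnil
      rw [abs_div, ih1.h1 e1, ih2.h2 e2]; norm_num
    · obtain ⟨e1, e2⟩ := split2_s12 h ih1.hnil ih2.hnil
      rw [abs_div, ih1.h2 e1, ih2.h3 e2]; norm_num
    · obtain ⟨e1, e2⟩ := split2_s12 h ih1.hnil ih2.hnil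
      rw [abs_div, ih1.h3 e1, ih2.h2 e2]; norm_num
    · obtain ⟨e1, e2⟩ := split2_s12 h ih1.hnil ih2.hnil
      rw [abs_div, ih1.h2 e1, ih2.h1 e2]; norm_num
    · rcases split3 h ih1.hnil ih2.hnil with ⟨e1, e2⟩ | ⟨e1, e2⟩
      · have hx := ih1.h1 e1; have hy := ih2.h23 e2
        have hy' : (8 : ℝ)⁻¹ ≤ |y| := by
          rcases hy with h' | h' | h' | h' | h' | h' | h' <;> rw [h'] <;> norm_num
        have hpos : (0 : ℝ) < |y| := lt_of_lt_of_le (by norm_num) hy'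
        rw [abs_div, hx, div_le_iff₀ hpos]; linarith
      · have hx := ih1.h12 e1; have hy := ih2.h3 e2
        have hx' : |x| ≤ 6 := by
          rcases hx with h' | h' | h' | h' | h' <;> rw [h'] <;> norm_num
        rw [abs_div, hy, div_le_iff₀ (by norm_num : (0:ℝ) < 3)]; linarith
    · rcases split3 h ih1.hnil ih2.hnil with ⟨e1, e2⟩ | ⟨e1, e2⟩
      · have hx := ih1.h3 e1; have hy := ih2.h21 e2
        have hy' : (2 : ℝ)⁻¹ ≤ |y| := by
          rcases hy with h' | h' | h' | h' | h' <;> rw [h'] <;> norm_num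
        have hpos : (0 : ℝ) < |y| := lt_of_lt_of_le (by norm_num) hy'
        rw [abs_div, hx, div_le_iff₀ hpos]; linarith
      · have hx := ih1.h32 e1; have hy := ih2.h1 e2
        have hx' : |x| ≤ 14 := by
          rcases hx with h' | h' | h' | h' | h' | h' | h' <;> rw [h'] <;> norm_num
        rw [abs_div, hy, div_le_iff₀ (by norm_num : (0:ℝ) < 1)]; linarith
  | @rpow l₁ l₂ x y hx0 _ _ ih1 ih2 =>
    have habs : |x ^ y| = x ^ y := abs_of_pos (Real.rpow_pos_of_pos hx0 y)
    refine ⟨?_, ?_, ?_, ?_, ?_, ?_, ?_, ?_, ?_, ?_⟩ <;> intro h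
    · exact splitNil h ih1.hnil
    · exact (split1_s12 h ih1.hnil ih2.hnil).elim
    · exact (split1_s12 h ih1.hnil ih2.hnil).elim
    · exact (split1_s12 h ih1.hnil ih2.hnil).elim
    · obtain ⟨e1, e2⟩ := split2_s12 h ih1.hnil ih2.hnil
      have hx : x = 1 := by have := ih1.h1 e1; rwa [abs_of_pos hx0] at this
      rw [hx, Real.one_rpow]; norm_num
    · obtain ⟨e1, e2⟩ := split2_s12 h ih1.hnil ih2.hnil
      have hx : x = 2 := by have := ih1.h2 e1; rwa [abs_of_pos hx0] at this
      rcases (abs_eq (by norm_num)).mp (ih2.h3 e2) with rfl | rfl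
      · rw [hx, show (3:ℝ) = ((3:ℤ):ℝ) by norm_num, Real.rpow_intCast, abs_zpow']; norm_num
      · rw [hx, show (-3:ℝ) = ((-3:ℤ):ℝ) by norm_num, Real.rpow_intCast, abs_zpow']; norm_num
    · obtain ⟨e1, e2⟩ := split2_s12 h ih1.hnil ih2.hnil
      have hx : x = 3 := by have := ih1.h3 e1; rwa [abs_of_pos hx0] at this
      rcases (abs_eq (by norm_num)).mp (ih2.h2 e2) with rfl | rfl
      · rw [hx, show (2:ℝ) = ((2:ℤ):ℝ) by norm_num, Real.rpow_intCast, abs_zpow']; norm_num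
      · rw [hx, show (-2:ℝ) = ((-2:ℤ):ℝ) by norm_num, Real.rpow_intCast, abs_zpow']; norm_num
    · obtain ⟨e1, e2⟩ := split2_s12 h ih1.hnil ih2.hnil
      have hx : x = 2 := by have := ih1.h2 e1; rwa [abs_of_pos hx0] at this
      rcases (abs_eq (by norm_num)).mp (ih2.h1 e2) with rfl | rfl
      · rw [hx, show (1:ℝ) = ((1:ℤ):ℝ) by norm_num, Real.rpow_intCast, abs_zpow']; norm_num
      · rw [hx, show (-1:ℝ) = ((-1:ℤ):ℝ) by norm_num, Real.rpow_intCast, abs_zpow']; norm_num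
    · rcases split3 h ih1.hnil ih2.hnil with ⟨e1, e2⟩ | ⟨e1, e2⟩
      · have hx : x = 1 := by have := ih1.h1 e1; rwa [abs_of_pos hx0] at this
        rw [hx, Real.one_rpow]; norm_num
      · have hx := ih1.h12 e1
        rw [abs_of_pos hx0] at hx
        have h1 : x ≤ 6 := by rcases hx with rfl | rfl | rfl | rfl | rfl <;> norm_num
        have h2 : x⁻¹ ≤ 6 := by rcases hx with rfl | rfl | rfl | rfl | rfl <;> norm_num
        have hy : |y| ≤ 3 := le_of_eq (ih2.h3 e2)
        have hb := rpow_le hx0 (by norm_num : (1:ℝ) ≤ 6) h1 h2 hy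
        rw [habs]; rw [rpow_cube] at hb; linarith
    · rcases split3 h ih1.hnil ih2.hnil with ⟨e1, e2⟩ | ⟨e1, e2⟩
      · have hx : x = 3 := by have := ih1.h3 e1; rwa [abs_of_pos hx0] at this
        have hy : |y| ≤ 9 := by
          rcases ih2.h21 e2 with h' | h' | h' | h' | h' <;> rw [h'] <;> norm_num
        have h2 : x⁻¹ ≤ 3 := by rw [hx]; norm_num
        have hb := rpow_le hx0 (by norm_num : (1:ℝ) ≤ 3) (le_of_eq hx) h2 hy
        rw [habs]; rw [rpow_nine] at hb; linarith
      · have hx := ih1.h32 e1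
        rw [abs_of_pos hx0] at hx
        have h1 : x ≤ 14 := by
          rcases hx with rfl | rfl | rfl | rfl | rfl | rfl | rfl <;> norm_num
        have h2 : x⁻¹ ≤ 14 := by
          rcases hx with rfl | rfl | rfl | rfl | rfl | rfl | rfl <;> norm_num
        have hy : |y| ≤ 1 := le_of_eq (ih2.h1 e2)
        have hb := rpow_le hx0 (by norm_num : (1:ℝ) ≤ 14) h1 h2 hy
        rw [Real.rpow_one] at hb
        rw [habs]; linarith
  | @zpow l₁ l₂ x n hxne _ _ ih1 ih2 =>
    refine ⟨?_, ?_, ?_, ?_, ?_, ?_, ?_, ?_, ?_, ?_⟩ <;> intro h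
    · exact splitNil h ih1.hnil
    · exact (split1_s12 h ih1.hnil ih2.hnil).elim
    · exact (split1_s12 h ih1.hnil ih2.hnil).elim
    · exact (split1_s12 h ih1.hnil ih2.hnil).elim
    · obtain ⟨e1, e2⟩ := split2_s12 h ih1.hnil ih2.hnil
      rw [abs_zpow', ih1.h1 e1, one_zpow]; norm_num
    · obtain ⟨e1, e2⟩ := split2_s12 h ih1.hnil ih2.hnil
      have hn : |n| = 3 := by exact_mod_cast intAbsOf (ih2.h3 e2)
      rcases (abs_eq (by norm_num : (0:ℤ) ≤ 3)).mp hn with rfl | rfl <;>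
        rw [abs_zpow', ih1.h2 e1] <;> norm_num
    · obtain ⟨e1, e2⟩ := split2_s12 h ih1.hnil ih2.hnil
      have hn : |n| = 2 := by exact_mod_cast intAbsOf (ih2.h2 e2)
      rcases (abs_eq (by norm_num : (0:ℤ) ≤ 2)).mp hn with rfl | rfl <;>
        rw [abs_zpow', ih1.h3 e1] <;> norm_num
    · obtain ⟨e1, e2⟩ := split2_s12 h ih1.hnil ih2.hnil
      have hn : |n| = 1 := by exact_mod_cast intAbsOf (ih2.h1 e2)
      rcases (abs_eq (by norm_num : (0:ℤ) ≤ 1)).mp hn with rfl | rfl <;>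
        rw [abs_zpow', ih1.h2 e1] <;> norm_num
    · rcases split3 h ih1.hnil ih2.hnil with ⟨e1, e2⟩ | ⟨e1, e2⟩
      · rw [abs_zpow', ih1.h1 e1, one_zpow]; norm_num
      · have hx := ih1.h12 e1
        have hn : |n| = 3 := by exact_mod_cast intAbsOf (ih2.h3 e2)
        rcases (abs_eq (by norm_num : (0:ℤ) ≤ 3)).mp hn with rfl | rfl <;>
          rcases hx with h' | h' | h' | h' | h' <;> rw [abs_zpow', h'] <;> norm_num
    · rcases split3 h ih1.hnil ih2.hnil with ⟨e1, e2⟩ | ⟨e1, e2⟩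
      · have hx := ih1.h3 e1
        rcases ih2.h21 e2 with h' | h' | h' | h' | h'
        · have hn : |n| = 9 := by exact_mod_cast intAbsOf h'
          rcases (abs_eq (by norm_num : (0:ℤ) ≤ 9)).mp hn with rfl | rfl <;>
            rw [abs_zpow', hx] <;> norm_num
        · have hn : |n| = 3 := by exact_mod_cast intAbsOf h'
          rcases (abs_eq (by norm_num : (0:ℤ) ≤ 3)).mp hn with rfl | rfl <;>
            rw [abs_zpow', hx] <;> norm_num
        · have hn : |n| = 1 := by exact_mod_cast intAbsOf h'
          rcases (abs_eq (by norm_num : (0:ℤ) ≤ 1)).mp hn with rfl | rfl <;>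
            rw [abs_zpow', hx] <;> norm_num
        · have hn : |n| = 2 := by exact_mod_cast intAbsOf h'
          rcases (abs_eq (by norm_num : (0:ℤ) ≤ 2)).mp hn with rfl | rfl <;>
            rw [abs_zpow', hx] <;> norm_num
        · exfalso
          have h2 : (2:ℝ) * ((|n| : ℤ) : ℝ) = 1 := by rw [intAbsOf h']; norm_num
          have h3 : (2 * |n| : ℤ) = 1 := by exact_mod_cast h2
          omega
      · have hx := ih1.h32 e1
        have hn : |n| = 1 := by exact_mod_cast intAbsOf (ih2.h1 e2)
        rcases (abs_eq (by norm_num : (0:ℤ) ≤ 1)).mp hn with rfl | rfl <;>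
          rcases hx with h' | h' | h' | h' | h' | h' | h' <;> rw [abs_zpow', h'] <;> norm_num

theorem base4_largest_integer :
    numeralValue 4 [2, 1] = 9 ∧
    CsrEval 4 [3, 2, 1] ((3 : ℝ) ^ (9 : ℝ)) ∧
    ((3 : ℝ) ^ (9 : ℝ) = 19683) ∧
    DecCsr 4 (19683 : ℝ) ∧
    (∀ n : ℤ, 19683 < n → ¬ (IncCsr 4 (n : ℝ) ∨ DecCsr 4 (n : ℝ))) := by
  have e1 : CsrEval 4 [3] (3 : ℝ) := by
    have := CsrEval.lit (b := 4) [3] (by simp)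
    norm_num [numeralValue] at this
    exact this
  have e2 : CsrEval 4 [2, 1] (9 : ℝ) := by
    have := CsrEval.lit (b := 4) [2, 1] (by simp)
    norm_num [numeralValue] at this
    exact this
  have hrep : CsrEval 4 [3, 2, 1] ((3 : ℝ) ^ (9 : ℝ)) :=
    CsrEval.rpow (by norm_num) e1 e2
  refine ⟨by norm_num [numeralValue], hrep, rpow_nine, ?_, ?_⟩
  · have h2 := hrep
    rw [rpow_nine] at h2
    unfold DecCsr
    exact h2
  · rintro n hn (h | h)
    · have h' : CsrEval 4 [1, 2, 3] (n : ℝ) := h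
      have hb := (csrP h').h123 rfl
      have hcast : (19683 : ℝ) < (n : ℝ) := by exact_mod_cast hn
      have := le_abs_self (n : ℝ)
      linarith
    · have h' : CsrEval 4 [3, 2, 1] (n : ℝ) := h
      have hb := (csrP h').h321 rfl
      have hcast : (19683 : ℝ) < (n : ℝ) := by exact_mod_cast hn
      have := le_abs_self (n : ℝ)
      linarith
end

section
/- The smallest base in which the prime 127 has an increasing crazy sequential representation is 5: the prime 127 has an increasing crazy sequential representation in base 5 (namely −1 + 2^(3+4) = 127), but has no increasing crazy sequential representation in base 3 or base 4. -/
/- ### Auxiliary lemmas -/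

lemma split_one {l₁ l₂ : List ℕ} {a : ℕ} (h : l₁ ++ l₂ = [a])
    (h₁ : l₁ ≠ []) (h₂ : l₂ ≠ []) : False := by
  rcases l₁ with _ | ⟨x, t⟩ <;> simp_all

lemma split_two {l₁ l₂ : List ℕ} {a b : ℕ} (h : l₁ ++ l₂ = [a, b])
    (h₁ : l₁ ≠ []) (h₂ : l₂ ≠ []) : l₁ = [a] ∧ l₂ = [b] := by
  rcases l₁ with _ | ⟨x, _ | ⟨y, t⟩⟩ <;> simp_all

lemma split_three {l₁ l₂ : List ℕ} {a b c : ℕ} (h : l₁ ++ l₂ = [a, b, c])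
    (h₁ : l₁ ≠ []) (h₂ : l₂ ≠ []) :
    (l₁ = [a] ∧ l₂ = [b, c]) ∨ (l₁ = [a, b] ∧ l₂ = [c]) := by
  rcases l₁ with _ | ⟨x, _ | ⟨y, _ | ⟨z, t⟩⟩⟩ <;> simp_all

lemma rpow_nat3 (x : ℝ) : x ^ (3 : ℝ) = x ^ (3 : ℕ) := by
  rw [show (3 : ℝ) = ((3 : ℕ) : ℝ) by norm_num, Real.rpow_natCast]

lemma rpow_negint3 (x : ℝ) : x ^ (-3 : ℝ) = x ^ (-3 : ℤ) := by
  rw [show (-3 : ℝ) = ((-3 : ℤ) : ℝ) by norm_num, Real.rpow_intCast]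

lemma pm_one_zpow {x : ℝ} (hx : x = 1 ∨ x = -1) (n : ℤ) : x ^ n = 1 ∨ x ^ n = -1 := by
  rcases hx with rfl | rfl
  · left; exact one_zpow n
  · rcases Int.even_or_odd n with h | h
    · left; exact h.neg_one_zpow
    · right; exact h.neg_one_zpow

/-- Possible values on the digit block `[1,2]` in base 4. -/
def V12 (x : ℝ) : Prop :=
  x = 6 ∨ x = -6 ∨ x = 3 ∨ x = -3 ∨ x = 1 ∨ x = -1 ∨ x = 2 ∨ x = -2 ∨
    x = 2⁻¹ ∨ x = -2⁻¹

/-- Possible values on the digit block `[2,3]` in base 4. -/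
def V23 (x : ℝ) : Prop :=
  x = 11 ∨ x = -11 ∨ x = 5 ∨ x = -5 ∨ x = 1 ∨ x = -1 ∨ x = 6 ∨ x = -6 ∨
    x = 2 / 3 ∨ x = -(2 / 3) ∨ x = 8 ∨ x = -8 ∨ x = 8⁻¹ ∨ x = -8⁻¹

/-- No crazy-sequential value in base 2. -/
lemma csr2 {l : List ℕ} {x : ℝ} (h : CsrEval 2 l x) :
    l ≠ [] ∧ (l = [1] → x = 1 ∨ x = -1) := by
  induction h with
  | lit l hl =>
      refine ⟨hl, ?_⟩; rintro rfl; norm_num [numeralValue]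
  | add h₁ h₂ ih₁ ih₂ =>
      exact ⟨by simp [ih₁.1], fun he => (split_one he ih₁.1 ih₂.1).elim⟩
  | mul h₁ h₂ ih₁ ih₂ =>
      exact ⟨by simp [ih₁.1], fun he => (split_one he ih₁.1 ih₂.1).elim⟩
  | div hy h₁ h₂ ih₁ ih₂ =>
      exact ⟨by simp [ih₁.1], fun he => (split_one he ih₁.1 ih₂.1).elim⟩
  | rpow hx h₁ h₂ ih₁ ih₂ =>
      exact ⟨by simp [ih₁.1], fun he => (split_one he ih₁.1 ih₂.1).elim⟩
  | zpow n hx h₁ h₂ ih₁ ih₂ =>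
      exact ⟨by simp [ih₁.1], fun he => (split_one he ih₁.1 ih₂.1).elim⟩
  | neg h ih =>
      refine ⟨ih.1, fun he => ?_⟩
      rcases ih.2 he with rfl | rfl <;> norm_num

/-- Classification of crazy-sequential values in base 3. -/
lemma csr3 {l : List ℕ} {x : ℝ} (h : CsrEval 3 l x) :
    l ≠ [] ∧ (l = [1] → x = 1 ∨ x = -1) ∧ (l = [2] → x = 2 ∨ x = -2) ∧
    (l = [1, 2] → x ≠ 127 ∧ x ≠ -127) := by
  induction h with
  | lit l hl =>
      refine ⟨hl, ?_, ?_, ?_⟩ <;> rintro rfl <;> norm_num [numeralValue]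
  | add h₁ h₂ ih₁ ih₂ =>
      obtain ⟨ne₁, p1₁, p2₁, _⟩ := ih₁
      obtain ⟨ne₂, p1₂, p2₂, _⟩ := ih₂
      refine ⟨by simp [ne₁], fun he => (split_one he ne₁ ne₂).elim,
        fun he => (split_one he ne₁ ne₂).elim, fun he => ?_⟩
      obtain ⟨e₁, e₂⟩ := split_two he ne₁ ne₂
      rcases p1₁ e₁ with rfl | rfl <;> rcases p2₂ e₂ with rfl | rfl <;> norm_num
  | mul h₁ h₂ ih₁ ih₂ =>
      obtain ⟨ne₁, p1₁, p2₁, _⟩ := ih₁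
      obtain ⟨ne₂, p1₂, p2₂, _⟩ := ih₂
      refine ⟨by simp [ne₁], fun he => (split_one he ne₁ ne₂).elim,
        fun he => (split_one he ne₁ ne₂).elim, fun he => ?_⟩
      obtain ⟨e₁, e₂⟩ := split_two he ne₁ ne₂
      rcases p1₁ e₁ with rfl | rfl <;> rcases p2₂ e₂ with rfl | rfl <;> norm_num
  | div hy h₁ h₂ ih₁ ih₂ =>
      obtain ⟨ne₁, p1₁, p2₁, _⟩ := ih₁
      obtain ⟨ne₂, p1₂, p2₂, _⟩ := ih₂
      refine ⟨by simp [ne₁], fun he => (split_one he ne₁ ne₂).elim,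
        fun he => (split_one he ne₁ ne₂).elim, fun he => ?_⟩
      obtain ⟨e₁, e₂⟩ := split_two he ne₁ ne₂
      rcases p1₁ e₁ with rfl | rfl <;> rcases p2₂ e₂ with rfl | rfl <;> norm_num
  | @rpow l₁ l₂ x y hx h₁ h₂ ih₁ ih₂ =>
      obtain ⟨ne₁, p1₁, p2₁, _⟩ := ih₁
      obtain ⟨ne₂, p1₂, p2₂, _⟩ := ih₂
      refine ⟨by simp [ne₁], fun he => (split_one he ne₁ ne₂).elim,
        fun he => (split_one he ne₁ ne₂).elim, fun he => ?_⟩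
      obtain ⟨e₁, e₂⟩ := split_two he ne₁ ne₂
      rcases p1₁ e₁ with rfl | rfl
      · norm_num [Real.one_rpow]
      · norm_num at hx
  | @zpow l₁ l₂ x n hx h₁ h₂ ih₁ ih₂ =>
      obtain ⟨ne₁, p1₁, p2₁, _⟩ := ih₁
      obtain ⟨ne₂, p1₂, p2₂, _⟩ := ih₂
      refine ⟨by simp [ne₁], fun he => (split_one he ne₁ ne₂).elim,
        fun he => (split_one he ne₁ ne₂).elim, fun he => ?_⟩
      obtain ⟨e₁, e₂⟩ := split_two he ne₁ ne₂
      rcases pm_one_zpow (p1₁ e₁) n with h' | h' <;> rw [h'] <;> norm_num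
  | neg h ih =>
      obtain ⟨ne, p1, p2, p12⟩ := ih
      refine ⟨ne, fun he => ?_, fun he => ?_, fun he => ?_⟩
      · rcases p1 he with rfl | rfl <;> norm_num
      · rcases p2 he with rfl | rfl <;> norm_num
      · obtain ⟨a, b⟩ := p12 he
        refine ⟨fun h' => b ?_, fun h' => a ?_⟩ <;> linarith

/-- Classification of crazy-sequential values in base 4. -/
lemma csr4 {l : List ℕ} {x : ℝ} (h : CsrEval 4 l x) :
    l ≠ [] ∧ (l = [1] → x = 1 ∨ x = -1) ∧ (l = [2] → x = 2 ∨ x = -2) ∧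
    (l = [3] → x = 3 ∨ x = -3) ∧ (l = [1, 2] → V12 x) ∧ (l = [2, 3] → V23 x) ∧
    (l = [1, 2, 3] → x ≠ 127 ∧ x ≠ -127) := by
  induction h with
  | lit l hl =>
      refine ⟨hl, ?_, ?_, ?_, ?_, ?_, ?_⟩ <;> rintro rfl <;>
        norm_num [numeralValue, V12, V23]
  | add h₁ h₂ ih₁ ih₂ =>
      obtain ⟨ne₁, p1₁, p2₁, p3₁, p12₁, p23₁, _⟩ := ih₁
      obtain ⟨ne₂, p1₂, p2₂, p3₂, p12₂, p23₂, _⟩ := ih₂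
      refine ⟨by simp [ne₁], fun he => (split_one he ne₁ ne₂).elim,
        fun he => (split_one he ne₁ ne₂).elim,
        fun he => (split_one he ne₁ ne₂).elim, fun he => ?_, fun he => ?_,
        fun he => ?_⟩
      · obtain ⟨e₁, e₂⟩ := split_two he ne₁ ne₂
        rcases p1₁ e₁ with rfl | rfl <;> rcases p2₂ e₂ with rfl | rfl <;>
          norm_num [V12]
      · obtain ⟨e₁, e₂⟩ := split_two he ne₁ ne₂
        rcases p2₁ e₁ with rfl | rfl <;> rcases p3₂ e₂ with rfl | rfl <;>
          norm_num [V23]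
      · rcases split_three he ne₁ ne₂ with ⟨e₁, e₂⟩ | ⟨e₁, e₂⟩
        · have hy := p23₂ e₂; simp only [V23] at hy
          rcases p1₁ e₁ with rfl | rfl <;>
            rcases hy with rfl|rfl|rfl|rfl|rfl|rfl|rfl|rfl|rfl|rfl|rfl|rfl|rfl|rfl <;>
            norm_num
        · have hx' := p12₁ e₁; simp only [V12] at hx'
          rcases hx' with rfl|rfl|rfl|rfl|rfl|rfl|rfl|rfl|rfl|rfl <;>
            rcases p3₂ e₂ with rfl | rfl <;> norm_num
  | mul h₁ h₂ ih₁ ih₂ =>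
      obtain ⟨ne₁, p1₁, p2₁, p3₁, p12₁, p23₁, _⟩ := ih₁
      obtain ⟨ne₂, p1₂, p2₂, p3₂, p12₂, p23₂, _⟩ := ih₂
      refine ⟨by simp [ne₁], fun he => (split_one he ne₁ ne₂).elim,
        fun he => (split_one he ne₁ ne₂).elim,
        fun he => (split_one he ne₁ ne₂).elim, fun he => ?_, fun he => ?_,
        fun he => ?_⟩
      · obtain ⟨e₁, e₂⟩ := split_two he ne₁ ne₂
        rcases p1₁ e₁ with rfl | rfl <;> rcases p2₂ e₂ with rfl | rfl <;>
          norm_num [V12]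
      · obtain ⟨e₁, e₂⟩ := split_two he ne₁ ne₂
        rcases p2₁ e₁ with rfl | rfl <;> rcases p3₂ e₂ with rfl | rfl <;>
          norm_num [V23]
      · rcases split_three he ne₁ ne₂ with ⟨e₁, e₂⟩ | ⟨e₁, e₂⟩
        · have hy := p23₂ e₂; simp only [V23] at hy
          rcases p1₁ e₁ with rfl | rfl <;>
            rcases hy with rfl|rfl|rfl|rfl|rfl|rfl|rfl|rfl|rfl|rfl|rfl|rfl|rfl|rfl <;>
            norm_num
        · have hx' := p12₁ e₁; simp only [V12] at hx'
          rcases hx' with rfl|rfl|rfl|rfl|rfl|rfl|rfl|rfl|rfl|rfl <;>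
            rcases p3₂ e₂ with rfl | rfl <;> norm_num
  | div hy h₁ h₂ ih₁ ih₂ =>
      obtain ⟨ne₁, p1₁, p2₁, p3₁, p12₁, p23₁, _⟩ := ih₁
      obtain ⟨ne₂, p1₂, p2₂, p3₂, p12₂, p23₂, _⟩ := ih₂
      refine ⟨by simp [ne₁], fun he => (split_one he ne₁ ne₂).elim,
        fun he => (split_one he ne₁ ne₂).elim,
        fun he => (split_one he ne₁ ne₂).elim, fun he => ?_, fun he => ?_,
        fun he => ?_⟩
      · obtain ⟨e₁, e₂⟩ := split_two he ne₁ ne₂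
        rcases p1₁ e₁ with rfl | rfl <;> rcases p2₂ e₂ with rfl | rfl <;>
          norm_num [V12]
      · obtain ⟨e₁, e₂⟩ := split_two he ne₁ ne₂
        rcases p2₁ e₁ with rfl | rfl <;> rcases p3₂ e₂ with rfl | rfl <;>
          norm_num [V23]
      · rcases split_three he ne₁ ne₂ with ⟨e₁, e₂⟩ | ⟨e₁, e₂⟩
        · have hy' := p23₂ e₂; simp only [V23] at hy'
          rcases p1₁ e₁ with rfl | rfl <;>
            rcases hy' with rfl|rfl|rfl|rfl|rfl|rfl|rfl|rfl|rfl|rfl|rfl|rfl|rfl|rfl <;>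
            norm_num
        · have hx' := p12₁ e₁; simp only [V12] at hx'
          rcases hx' with rfl|rfl|rfl|rfl|rfl|rfl|rfl|rfl|rfl|rfl <;>
            rcases p3₂ e₂ with rfl | rfl <;> norm_num
  | @rpow l₁ l₂ x y hx h₁ h₂ ih₁ ih₂ =>
      obtain ⟨ne₁, p1₁, p2₁, p3₁, p12₁, p23₁, _⟩ := ih₁
      obtain ⟨ne₂, p1₂, p2₂, p3₂, p12₂, p23₂, _⟩ := ih₂
      refine ⟨by simp [ne₁], fun he => (split_one he ne₁ ne₂).elim,
        fun he => (split_one he ne₁ ne₂).elim,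
        fun he => (split_one he ne₁ ne₂).elim, fun he => ?_, fun he => ?_,
        fun he => ?_⟩
      · obtain ⟨e₁, e₂⟩ := split_two he ne₁ ne₂
        rcases p1₁ e₁ with rfl | rfl
        · norm_num [Real.one_rpow, V12]
        · norm_num at hx
      · obtain ⟨e₁, e₂⟩ := split_two he ne₁ ne₂
        rcases p2₁ e₁ with rfl | rfl
        · rcases p3₂ e₂ with rfl | rfl <;>
            norm_num [V23, rpow_nat3, rpow_negint3]
        · norm_num at hx
      · rcases split_three he ne₁ ne₂ with ⟨e₁, e₂⟩ | ⟨e₁, e₂⟩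
        · rcases p1₁ e₁ with rfl | rfl
          · norm_num [Real.one_rpow]
          · norm_num at hx
        · have hx' := p12₁ e₁; simp only [V12] at hx'
          rcases hx' with rfl|rfl|rfl|rfl|rfl|rfl|rfl|rfl|rfl|rfl <;>
            [skip; norm_num at hx; skip; norm_num at hx; skip; norm_num at hx;
             skip; norm_num at hx; skip; norm_num at hx] <;>
            rcases p3₂ e₂ with rfl | rfl <;>
            norm_num [rpow_nat3, rpow_negint3]
  | @zpow l₁ l₂ x n hx h₁ h₂ ih₁ ih₂ =>
      obtain ⟨ne₁, p1₁, p2₁, p3₁, p12₁, p23₁, _⟩ := ih₁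
      obtain ⟨ne₂, p1₂, p2₂, p3₂, p12₂, p23₂, _⟩ := ih₂
      refine ⟨by simp [ne₁], fun he => (split_one he ne₁ ne₂).elim,
        fun he => (split_one he ne₁ ne₂).elim,
        fun he => (split_one he ne₁ ne₂).elim, fun he => ?_, fun he => ?_,
        fun he => ?_⟩
      · obtain ⟨e₁, e₂⟩ := split_two he ne₁ ne₂
        rcases pm_one_zpow (p1₁ e₁) n with h' | h' <;> rw [h'] <;> norm_num [V12]
      · obtain ⟨e₁, e₂⟩ := split_two he ne₁ ne₂
        have hn : n = 3 ∨ n = -3 := by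
          rcases p3₂ e₂ with h' | h'
          · exact Or.inl (by exact_mod_cast h')
          · exact Or.inr (by exact_mod_cast h')
        rcases p2₁ e₁ with rfl | rfl <;> rcases hn with rfl | rfl <;>
          norm_num [V23]
      · rcases split_three he ne₁ ne₂ with ⟨e₁, e₂⟩ | ⟨e₁, e₂⟩
        · rcases pm_one_zpow (p1₁ e₁) n with h' | h' <;> rw [h'] <;> norm_num
        · have hn : n = 3 ∨ n = -3 := by
            rcases p3₂ e₂ with h' | h'
            · exact Or.inl (by exact_mod_cast h')
            · exact Or.inr (by exact_mod_cast h')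
          have hx' := p12₁ e₁; simp only [V12] at hx'
          rcases hx' with rfl|rfl|rfl|rfl|rfl|rfl|rfl|rfl|rfl|rfl <;>
            rcases hn with rfl | rfl <;> simp only [zpow_neg, zpow_ofNat] <;> norm_num
  | neg h ih =>
      obtain ⟨ne, p1, p2, p3, p12, p23, p123⟩ := ih
      refine ⟨ne, fun he => ?_, fun he => ?_, fun he => ?_, fun he => ?_,
        fun he => ?_, fun he => ?_⟩
      · rcases p1 he with rfl | rfl <;> norm_num
      · rcases p2 he with rfl | rfl <;> norm_num
      · rcases p3 he with rfl | rfl <;> norm_num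
      · have hx' := p12 he; simp only [V12] at hx' ⊢
        rcases hx' with rfl|rfl|rfl|rfl|rfl|rfl|rfl|rfl|rfl|rfl <;> norm_num
      · have hx' := p23 he; simp only [V23] at hx' ⊢
        rcases hx' with rfl|rfl|rfl|rfl|rfl|rfl|rfl|rfl|rfl|rfl|rfl|rfl|rfl|rfl <;>
          norm_num
      · obtain ⟨a, b⟩ := p123 he
        refine ⟨fun h' => b ?_, fun h' => a ?_⟩ <;> linarith

theorem prime_127_smallest_base :
    IncCsr 5 (127 : ℝ) ∧
    (-1 + (2 : ℝ) ^ ((3 : ℝ) + 4) = 127) ∧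
    ¬ IncCsr 3 (127 : ℝ) ∧ ¬ IncCsr 4 (127 : ℝ) ∧
    (∀ b : ℕ, 2 ≤ b → IncCsr b (127 : ℝ) → 5 ≤ b) := by
  have key2 : -1 + (2 : ℝ) ^ ((3 : ℝ) + 4) = 127 := by
    rw [show (3 : ℝ) + 4 = ((7 : ℕ) : ℝ) by norm_num, Real.rpow_natCast]
    norm_num
  have h5 : IncCsr 5 (127 : ℝ) := by
    have n1 : (numeralValue 5 [1] : ℝ) = 1 := by norm_num [numeralValue]
    have n2 : (numeralValue 5 [2] : ℝ) = 2 := by norm_num [numeralValue]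
    have n3 : (numeralValue 5 [3] : ℝ) = 3 := by norm_num [numeralValue]
    have n4 : (numeralValue 5 [4] : ℝ) = 4 := by norm_num [numeralValue]
    have h34 : CsrEval 5 [3, 4] ((3 : ℝ) + 4) := by
      rw [← n3, ← n4]
      exact .add (.lit [3] (by simp)) (.lit [4] (by simp))
    have h234 : CsrEval 5 [2, 3, 4] ((2 : ℝ) ^ ((3 : ℝ) + 4)) := by
      rw [← n2]
      exact .rpow (by rw [n2]; norm_num) (.lit [2] (by simp)) h34
    have h1 : CsrEval 5 [1] (-(1 : ℝ)) := by
      rw [← n1]; exact .neg (.lit [1] (by simp))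
    have h : CsrEval 5 [1, 2, 3, 4] (-(1 : ℝ) + (2 : ℝ) ^ ((3 : ℝ) + 4)) :=
      .add h1 h234
    have hrange : List.range' 1 (5 - 1) = [1, 2, 3, 4] := by decide
    unfold IncCsr
    rw [hrange, show (127 : ℝ) = -(1 : ℝ) + (2 : ℝ) ^ ((3 : ℝ) + 4) by
      linarith [key2]]
    exact h
  have h3 : ¬ IncCsr 3 (127 : ℝ) := by
    intro h
    unfold IncCsr at h
    rw [show List.range' 1 (3 - 1) = [1, 2] by decide] at h
    exact ((csr3 h).2.2.2 rfl).1 rfl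
  have h4 : ¬ IncCsr 4 (127 : ℝ) := by
    intro h
    unfold IncCsr at h
    rw [show List.range' 1 (4 - 1) = [1, 2, 3] by decide] at h
    exact ((csr4 h).2.2.2.2.2.2 rfl).1 rfl
  refine ⟨h5, key2, h3, h4, fun b hb h => ?_⟩
  by_contra hlt
  push_neg at hlt
  interval_cases b
  · unfold IncCsr at h
    rw [show List.range' 1 (2 - 1) = [1] by decide] at h
    rcases (csr2 h).2 rfl with h' | h' <;> norm_num at h'
  · exact h3 h
  · exact h4 h
end
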